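/- arXiv:1808.03022 — 10 statements merged into one kernel-verified Lean document; each statement's English description precedes it below -/
import Mathlib

section
/- Let S be a real symmetric k×k matrix (k ≥ 2), written in block form S = [[s₁₁, bᵀ],[b, S₂₂]] where s₁₁ is a scalar, b ∈ ℝ^{k−1}, and S₂₂ is the (k−1)×(k−1) principal submatrix obtained by deleting the first row and first column of S. If every eigenvector of S has a nonzero first entry, then S and S₂₂ have no common eigenvalue. -/
open Matrix in

/-- If `S` is a real symmetric `k×k` matrix (`k ≥ 2`) and every eigenvector
of `S` has a nonzero first entry, then `S` and the principal submatrix `S₂₂` obtained by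
deleting the first row and column of `S` have no common eigenvalue. -/
theorem stmt_1 (k : ℕ) (hk : 2 ≤ k) (S : Matrix (Fin k) (Fin k) ℝ) (hS : S.IsSymm)
    (h : ∀ v : Fin k → ℝ, v ≠ 0 → (∃ μ : ℝ, S.mulVec v = μ • v) → v ⟨0, by omega⟩ ≠ 0)
    (μ : ℝ) :
    ¬((∃ v : Fin k → ℝ, v ≠ 0 ∧ S.mulVec v = μ • v) ∧
      (∃ w : Fin (k - 1) → ℝ, w ≠ 0 ∧
        (Matrix.of fun a b : Fin (k - 1) =>
          S ⟨a.val + 1, by have := a.isLt; omega⟩ ⟨b.val + 1, by have := b.isLt; omega⟩).mulVec w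
          = μ • w)) := by
  rintro ⟨⟨v, hv0, hv⟩, ⟨w, hw0, hw⟩⟩
  obtain ⟨n, rfl⟩ : ∃ n, k = n + 1 := ⟨k - 1, by omega⟩
  set x : Fin (n + 1) → ℝ := Fin.cons 0 w with hx
  have hw' : ∀ i : Fin n, ∑ t : Fin n, S i.succ t.succ * w t = μ * w i := by
    intro i
    have := congrFun hw i
    simpa [Matrix.mulVec, dotProduct, Fin.succ] using this
  set c : ℝ := ∑ t : Fin n, S 0 t.succ * w t with hc
  have hSx : S.mulVec x = μ • x + fun j : Fin (n + 1) => if j = 0 then c else 0 := by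
    funext j
    refine Fin.cases ?_ ?_ j
    · simp [Matrix.mulVec, dotProduct, Fin.sum_univ_succ, hx, hc]
    · intro i
      simp [Matrix.mulVec, dotProduct, Fin.sum_univ_succ, hx,
        Fin.succ_ne_zero i, hw' i]
  have hv0' : v ⟨0, by omega⟩ ≠ 0 := h v hv0 ⟨μ, hv⟩
  have key : v ⬝ᵥ S.mulVec x = (S.mulVec v) ⬝ᵥ x := by
    rw [Matrix.dotProduct_mulVec, ← Matrix.mulVec_transpose, hS]
  have he : v ⬝ᵥ (fun j : Fin (n + 1) => if j = 0 then c else 0) = c * v 0 := by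
    simp [dotProduct, Fin.sum_univ_succ, Fin.succ_ne_zero, mul_comm]
  have h1 : v ⬝ᵥ S.mulVec x = μ * (v ⬝ᵥ x) + c * v 0 := by
    rw [hSx, dotProduct_add, dotProduct_smul, he]
    simp [smul_eq_mul]
  have h2 : v ⬝ᵥ S.mulVec x = μ * (v ⬝ᵥ x) := by
    rw [key, hv]
    simp [smul_dotProduct]
  have hcv : c * v 0 = 0 := by linarith [h1, h2]
  have hc0 : c = 0 := by
    rcases mul_eq_zero.mp hcv with h' | h'
    · exact h'
    · exact absurd h' hv0'
  have hSx' : S.mulVec x = μ • x := by rw [hSx, hc0]; funext j; simp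
  have hx0 : x ≠ 0 := by
    intro hxz
    apply hw0
    funext i
    have := congrFun hxz i.succ
    simpa [hx] using this
  exact h x hx0 ⟨μ, hSx'⟩ (by simp [hx])
end

section
/- Let G₁ and G₂ be connected finite simple graphs on vertex sets {1,…,k₁} and {1,…,k₂} (k₂ ≥ 2) with Laplacian matrices L₁ and L₂, and let s₁ ∈ {1,…,k₁}, s₂ ∈ {1,…,k₂}. Suppose every eigenvector of L₁ has a nonzero s₁-th entry and every eigenvector of L₂ has a nonzero s₂-th entry. Let L = I_{k₁} ⊗ L₂ + L₁ ⊗ (e_{s₂} e_{s₂}ᵀ) be the composite matrix. Then for every eigenvalue λ of L, the (k₂−1)×(k₂−1) matrix obtained from L₂ − λI by deleting its s₂-th row and s₂-th column is invertible. -/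
/-!
Write `A = L₂ - λ I`. If the principal submatrix of `A` at `s₂` were singular, a kernel vector of
it, extended by zero, would give `v` with `v s₂ = 0` and `A v = c e_{s₂}`. The eigenvector
hypothesis on `L₂` forces `c ≠ 0`, and then symmetry of `A` gives
`c y_{s₂} = ⟪y, A v⟫ = ⟪A y, v⟫ = 0` for every `y ∈ ker A`, so `A` is injective. For an
eigenvector `w` of the composite matrix, each row `w_i = w (i, ·)` satisfies
`A w_i = -(L₁ x)_i e_{s₂}` with `x = w (·, s₂)`; hence `w_i` is a multiple of `v`, so `x = 0`,
then `A w_i = 0`, and `w = 0`.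
-/

/-- The composite matrix `L = I_{k₁} ⊗ L₂ + L₁ ⊗ (e_s e_sᵀ)`, indexed by pairs. -/
def composite {k₁ k₂ : ℕ} (L₁ : Matrix (Fin k₁) (Fin k₁) ℝ) (L₂ : Matrix (Fin k₂) (Fin k₂) ℝ)
    (s : Fin k₂) : Matrix (Fin k₁ × Fin k₂) (Fin k₁ × Fin k₂) ℝ :=
  Matrix.of fun p q =>
    (if p.1 = q.1 then L₂ p.2 q.2 else 0) +
    L₁ p.1 q.1 * ((if p.2 = s then (1 : ℝ) else 0) * (if q.2 = s then (1 : ℝ) else 0))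

open Matrix

namespace Matrix

variable {K n : Type*} [Fintype n] [DecidableEq n]

theorem exists_mulVec_eq_single_of_det_submatrix_eq_zero [Field K] {A : Matrix n n K} {s : n}
    (h : (A.submatrix ((↑) : {a // a ≠ s} → n) (↑)).det = 0) :
    ∃ v : n → K, v ≠ 0 ∧ v s = 0 ∧ ∃ c, A *ᵥ v = Pi.single s c := by
  obtain ⟨u, hu0, hu⟩ := exists_mulVec_eq_zero_iff.mpr h
  let v : n → K := fun b => if hb : b = s then 0 else u ⟨b, hb⟩
  have hvs : v s = 0 := dif_pos rfl
  have hv : ∀ a : {a // a ≠ s}, v a = u a := fun a => dif_neg a.2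
  refine ⟨v, fun h0 => hu0 (funext fun a => by rw [← hv, h0]; rfl), hvs,
    (A *ᵥ v) s, funext fun a => ?_⟩
  by_cases ha : a = s
  · subst ha; simp
  rw [Pi.single_eq_of_ne ha, mulVec, dotProduct,
    ← Fintype.sum_subtype_add_sum_subtype (fun b => b ≠ s)]
  have hs : ∑ b : {b // ¬b ≠ s}, A a b * v b = 0 :=
    Finset.sum_eq_zero fun b _ => by rw [not_not.mp b.2, hvs, mul_zero]
  simpa [hs, hv, mulVec, dotProduct] using congrFun hu ⟨a, ha⟩

theorem IsSymm.mul_apply_eq_zero_of_mulVec_eq_single [CommSemiring K] {A : Matrix n n K}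
    (hA : A.IsSymm) {s : n} {c : K} {v y : n → K} (hv : A *ᵥ v = Pi.single s c)
    (hy : A *ᵥ y = 0) : y s * c = 0 := by
  calc y s * c = y ⬝ᵥ A *ᵥ v := by simp [hv]
    _ = (A *ᵥ y) ⬝ᵥ v := by rw [dotProduct_mulVec, ← mulVec_transpose, hA.eq]
    _ = 0 := by simp [hy]

theorem IsSymm.eq_zero_of_mulVec_eq_zero_and_exists_mulVec_eq_single [Field K] {A : Matrix n n K}
    (hA : A.IsSymm) {s : n} (hker : ∀ y, y ≠ 0 → A *ᵥ y = 0 → y s ≠ 0)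
    (h : (A.submatrix ((↑) : {a // a ≠ s} → n) (↑)).det = 0) :
    (∀ y, A *ᵥ y = 0 → y = 0) ∧ ∃ v, v s = 0 ∧ A *ᵥ v = Pi.single s 1 := by
  obtain ⟨v, hv0, hvs, c, hv⟩ := exists_mulVec_eq_single_of_det_submatrix_eq_zero h
  have hc : c ≠ 0 := by
    rintro rfl
    exact hker v hv0 (by rw [hv, Pi.single_zero]) hvs
  refine ⟨fun y hy => ?_, c⁻¹ • v, by simp [hvs], ?_⟩
  · by_contra hy0
    exact hker y hy0 hy (by simpa [hc] using hA.mul_apply_eq_zero_of_mulVec_eq_single hv hy)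
  · rw [mulVec_smul, hv, ← Pi.single_smul, smul_eq_mul, inv_mul_cancel₀ hc]

end Matrix

section Composite

variable {k₁ k₂ : ℕ} {L₁ : Matrix (Fin k₁) (Fin k₁) ℝ} {L₂ : Matrix (Fin k₂) (Fin k₂) ℝ}
  {s : Fin k₂} {lam : ℝ} {w : Fin k₁ × Fin k₂ → ℝ}

theorem composite_mulVec_apply (i : Fin k₁) (a : Fin k₂) :
    (composite L₁ L₂ s *ᵥ w) (i, a) =
      (L₂ *ᵥ Function.curry w i) a +
        (Pi.single s ((L₁ *ᵥ fun j => w (j, s)) i) : Fin k₂ → ℝ) a := by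
  simp only [mulVec, dotProduct, composite, of_apply, Fintype.sum_prod_type, add_mul,
    Finset.sum_add_distrib, Pi.single_apply]
  by_cases ha : a = s <;> simp [ha, ite_mul]

theorem sub_smul_one_mulVec_curry_of_composite_mulVec_eq_smul
    (hw : composite L₁ L₂ s *ᵥ w = lam • w) (i : Fin k₁) :
    (L₂ - lam • 1) *ᵥ Function.curry w i = Pi.single s (-(L₁ *ᵥ fun j => w (j, s)) i) := by
  ext a
  have h := congrFun hw (i, a)
  rw [composite_mulVec_apply] at h
  rw [sub_mulVec, smul_mulVec, one_mulVec, Pi.sub_apply, Pi.single_neg, Pi.neg_apply]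
  simp only [Pi.smul_apply, smul_eq_mul, Function.curry_apply] at h ⊢
  linarith

theorem eq_zero_of_composite_mulVec_eq_smul (hinj : ∀ y, (L₂ - lam • 1) *ᵥ y = 0 → y = 0)
    {v : Fin k₂ → ℝ} (hvs : v s = 0) (hv : (L₂ - lam • 1) *ᵥ v = Pi.single s 1)
    (hw : composite L₁ L₂ s *ᵥ w = lam • w) : w = 0 := by
  set x : Fin k₁ → ℝ := fun j => w (j, s)
  have hrow := sub_smul_one_mulVec_curry_of_composite_mulVec_eq_smul hw
  have hcurry : ∀ i, Function.curry w i = -(L₁ *ᵥ x) i • v := fun i =>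
    sub_eq_zero.mp (hinj _ (by
      rw [mulVec_sub, hrow, mulVec_smul, hv, ← Pi.single_smul, smul_eq_mul, mul_one, sub_self]))
  have hx : x = 0 := funext fun i => by
    simpa [hvs] using congrFun (hcurry i) s
  ext ⟨i, a⟩
  simpa [hx] using congrFun (hcurry i) a

end Composite

theorem stmt_2_general (k₁ k₂ : ℕ)
    (G₁ : SimpleGraph (Fin k₁)) [DecidableRel G₁.Adj]
    (G₂ : SimpleGraph (Fin k₂)) [DecidableRel G₂.Adj]
    (s₂ : Fin k₂)
    (h₂ : ∀ v : Fin k₂ → ℝ, v ≠ 0 → (∃ μ : ℝ, (G₂.lapMatrix ℝ).mulVec v = μ • v) → v s₂ ≠ 0)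
    (lam : ℝ)
    (hlam : ∃ w : Fin k₁ × Fin k₂ → ℝ, w ≠ 0 ∧
      (composite (G₁.lapMatrix ℝ) (G₂.lapMatrix ℝ) s₂).mulVec w = lam • w) :
    IsUnit (Matrix.of fun a b : {a : Fin k₂ // a ≠ s₂} =>
      (G₂.lapMatrix ℝ - lam • (1 : Matrix (Fin k₂) (Fin k₂) ℝ)) a.val b.val) := by
  rw [isUnit_iff_isUnit_det, isUnit_iff_ne_zero]
  intro hdet
  have hsymm : (G₂.lapMatrix ℝ - lam • 1).IsSymm :=
    (G₂.isSymm_lapMatrix (R := ℝ)).sub (isSymm_one.smul lam)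
  have hker : ∀ y, y ≠ 0 → (G₂.lapMatrix ℝ - lam • 1) *ᵥ y = 0 → y s₂ ≠ 0 := fun y hy0 hy =>
    h₂ y hy0 ⟨lam, by rwa [sub_mulVec, smul_mulVec, one_mulVec, sub_eq_zero] at hy⟩
  obtain ⟨hinj, v, hvs, hv⟩ :=
    hsymm.eq_zero_of_mulVec_eq_zero_and_exists_mulVec_eq_single hker hdet
  obtain ⟨w, hw0, hw⟩ := hlam
  exact hw0 (eq_zero_of_composite_mulVec_eq_smul hinj hvs hv hw)

theorem stmt_2 (k₁ k₂ : ℕ) (hk₂ : 2 ≤ k₂)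
    (G₁ : SimpleGraph (Fin k₁)) [DecidableRel G₁.Adj] (hG₁ : G₁.Connected)
    (G₂ : SimpleGraph (Fin k₂)) [DecidableRel G₂.Adj] (hG₂ : G₂.Connected)
    (s₁ : Fin k₁) (s₂ : Fin k₂)
    (h₁ : ∀ v : Fin k₁ → ℝ, v ≠ 0 → (∃ μ : ℝ, (G₁.lapMatrix ℝ).mulVec v = μ • v) → v s₁ ≠ 0)
    (h₂ : ∀ v : Fin k₂ → ℝ, v ≠ 0 → (∃ μ : ℝ, (G₂.lapMatrix ℝ).mulVec v = μ • v) → v s₂ ≠ 0)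
    (lam : ℝ)
    (hlam : ∃ w : Fin k₁ × Fin k₂ → ℝ, w ≠ 0 ∧
      (composite (G₁.lapMatrix ℝ) (G₂.lapMatrix ℝ) s₂).mulVec w = lam • w) :
    IsUnit (Matrix.of fun a b : {a : Fin k₂ // a ≠ s₂} =>
      (G₂.lapMatrix ℝ - lam • (1 : Matrix (Fin k₂) (Fin k₂) ℝ)) a.val b.val) :=
  stmt_2_general k₁ k₂ G₁ G₂ s₂ h₂ lam hlam
end

section
/- Let G₁ and G₂ be connected finite simple graphs on vertex sets {1,…,k₁} and {1,…,k₂} with Laplacian matrices L₁ and L₂, let s ∈ {1,…,k₂}, and suppose there is a nonempty set P ⊆ {1,…,k₁} such that every eigenvector of L₁ has nonzero entries at all positions in P, and every eigenvector of L₂ has a nonzero s-th entry. Then every eigenvalue λ of the composite matrix L = I_{k₁} ⊗ L₂ + L₁ ⊗ (e_s e_sᵀ) is simple, i.e., the kernel of L − λI is one-dimensional. -/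
open Matrix Function

theorem Submodule.finrank_eq_one_of_ne_bot_of_disjoint_ker {K V : Type*} [Field K]
    [AddCommGroup V] [Module K V] [FiniteDimensional K V] {W : Submodule K V} (f : V →ₗ[K] K)
    (hW : W ≠ ⊥) (hf : Disjoint W (LinearMap.ker f)) : Module.finrank K W = 1 := by
  have hinj : Injective (f ∘ₗ W.subtype) := by
    refine (injective_iff_map_eq_zero _).mpr fun v hv => ?_
    exact Subtype.ext (Submodule.disjoint_def.mp hf v v.2 hv)
  have hle := LinearMap.finrank_le_finrank_of_injective hinj
  rw [Module.finrank_self] at hle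
  exact le_antisymm hle (Submodule.one_le_finrank_iff.mpr hW)

section Composite

variable {k₁ k₂ : ℕ} (A : Matrix (Fin k₁) (Fin k₁) ℝ) (B : Matrix (Fin k₂) (Fin k₂) ℝ)
  (s : Fin k₂)

theorem composite_sub_smul_one (lam : ℝ) :
    composite A B s - lam • (1 : Matrix (Fin k₁ × Fin k₂) (Fin k₁ × Fin k₂) ℝ)
      = composite A (B - lam • 1) s := by
  ext ⟨i, a⟩ ⟨j, b⟩
  by_cases hij : i = j <;> by_cases hab : a = b <;>
    simp [composite, one_apply, Prod.ext_iff, hij, hab, sub_add_eq_add_sub]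

theorem curry_composite_mulVec (w : Fin k₁ × Fin k₂ → ℝ) (i : Fin k₁) :
    curry (composite A B s *ᵥ w) i
      = B *ᵥ curry w i + (A *ᵥ fun j => w (j, s)) i • Pi.single s 1 := by
  ext a
  simp [mulVec, dotProduct, composite, Fintype.sum_prod_type, add_mul, Finset.sum_add_distrib,
    Pi.single_apply, ite_mul, mul_comm]

variable {A B s} {w : Fin k₁ × Fin k₂ → ℝ} (hw : composite A B s *ᵥ w = 0)
include hw

theorem mulVec_curry_of_composite_mulVec_eq_zero (i : Fin k₁) :
    B *ᵥ curry w i = -((A *ᵥ fun j => w (j, s)) i • Pi.single s 1) := by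
  have h := curry_composite_mulVec A B s w i
  rw [hw] at h
  exact eq_neg_of_add_eq_zero_left h.symm

theorem col_ne_zero_of_composite_mulVec_eq_zero (hs : ∀ y, B *ᵥ y = 0 → y s = 0 → y = 0)
    (hw0 : w ≠ 0) : (fun j => w (j, s)) ≠ 0 := by
  intro hu
  have hrow : ∀ i, curry w i = 0 := fun i => hs _
    (by rw [mulVec_curry_of_composite_mulVec_eq_zero hw, hu, mulVec_zero]; simp)
    (congrFun hu i)
  exact hw0 (funext fun p => congrFun (hrow p.1) p.2)

theorem mulVec_col_eq_zero_of_mulVec_eq_zero (hB : B.IsSymm) {y : Fin k₂ → ℝ}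
    (hy : B *ᵥ y = 0) (hys : y s ≠ 0) : (A *ᵥ fun j => w (j, s)) = 0 := by
  funext i
  have h : y ⬝ᵥ (B *ᵥ curry w i) = 0 := by
    rw [dotProduct_mulVec, ← mulVec_transpose, hB.eq, hy, zero_dotProduct]
  rw [mulVec_curry_of_composite_mulVec_eq_zero hw, dotProduct_neg, dotProduct_smul,
    dotProduct_single, mul_one, smul_eq_mul, neg_eq_zero] at h
  exact (mul_eq_zero.mp h).resolve_right hys

theorem exists_mulVec_col_eq_smul_of_injective (hB : Injective B.mulVec)
    (hu : (fun j => w (j, s)) ≠ 0) :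
    ∃ μ : ℝ, (A *ᵥ fun j => w (j, s)) = μ • fun j => w (j, s) := by
  set c := A *ᵥ fun j => w (j, s)
  obtain ⟨z, hz⟩ := (mulVec_surjective_iff_isUnit.mpr (mulVec_injective_iff_isUnit.mp hB))
    (-Pi.single s 1)
  have hrow : ∀ i, curry w i = c i • z := fun i => hB (by
    rw [mulVec_curry_of_composite_mulVec_eq_zero hw, mulVec_smul, hz, smul_neg])
  have hcol : (fun j => w (j, s)) = z s • c := funext fun i => by
    simpa [mul_comm] using congrFun (hrow i) s
  have hzs : z s ≠ 0 := by
    intro h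
    exact hu (by rw [hcol, h, zero_smul])
  exact ⟨(z s)⁻¹, by rw [hcol, smul_smul, inv_mul_cancel₀ hzs, one_smul]⟩

theorem exists_mulVec_col_eq_smul_of_composite_mulVec_eq_zero (hB : B.IsSymm)
    (hs : ∀ y, B *ᵥ y = 0 → y s = 0 → y = 0) (hw0 : w ≠ 0) :
    ∃ μ : ℝ, (A *ᵥ fun j => w (j, s)) = μ • fun j => w (j, s) := by
  by_cases hinj : Injective B.mulVec
  · exact exists_mulVec_col_eq_smul_of_injective hw hinj
      (col_ne_zero_of_composite_mulVec_eq_zero hw hs hw0)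
  · rw [← coe_mulVecLin, injective_iff_map_eq_zero] at hinj
    push Not at hinj
    obtain ⟨y, hy, hy0⟩ := hinj
    refine ⟨0, ?_⟩
    rw [mulVec_col_eq_zero_of_mulVec_eq_zero hw hB hy fun hys => hy0 (hs y hy hys), zero_smul]

end Composite

theorem sub_smul_one_mulVec_eq_zero_iff {n R : Type*} [Fintype n] [DecidableEq n] [CommRing R]
    (M : Matrix n n R) (lam : R) (v : n → R) : (M - lam • 1) *ᵥ v = 0 ↔ M *ᵥ v = lam • v := by
  rw [sub_mulVec, smul_mulVec, one_mulVec, sub_eq_zero]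

theorem stmt_3_general (k₁ k₂ : ℕ)
    (G₁ : SimpleGraph (Fin k₁)) [DecidableRel G₁.Adj]
    (G₂ : SimpleGraph (Fin k₂)) [DecidableRel G₂.Adj]
    (s : Fin k₂) (P : Set (Fin k₁)) (hP : P.Nonempty)
    (h₁ : ∀ v : Fin k₁ → ℝ, v ≠ 0 → (∃ μ : ℝ, (G₁.lapMatrix ℝ).mulVec v = μ • v) →
      ∀ i ∈ P, v i ≠ 0)
    (h₂ : ∀ v : Fin k₂ → ℝ, v ≠ 0 → (∃ μ : ℝ, (G₂.lapMatrix ℝ).mulVec v = μ • v) → v s ≠ 0)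
    (lam : ℝ)
    (hlam : ∃ w : Fin k₁ × Fin k₂ → ℝ, w ≠ 0 ∧
      (composite (G₁.lapMatrix ℝ) (G₂.lapMatrix ℝ) s).mulVec w = lam • w) :
    Module.finrank ℝ
      (LinearMap.ker ((composite (G₁.lapMatrix ℝ) (G₂.lapMatrix ℝ) s
        - lam • (1 : Matrix (Fin k₁ × Fin k₂) (Fin k₁ × Fin k₂) ℝ)).mulVecLin)) = 1 := by
  obtain ⟨i₀, hi₀⟩ := hP
  have hB : (G₂.lapMatrix ℝ - lam • 1).IsSymm :=
    (G₂.isSymm_lapMatrix ℝ).sub (isSymm_one.smul lam)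
  have hs : ∀ y, (G₂.lapMatrix ℝ - lam • 1) *ᵥ y = 0 → y s = 0 → y = 0 := fun y hy hys => by
    by_contra hy0
    exact h₂ y hy0 ⟨lam, (sub_smul_one_mulVec_eq_zero_iff _ _ _).mp hy⟩ hys
  refine Submodule.finrank_eq_one_of_ne_bot_of_disjoint_ker (LinearMap.proj (i₀, s)) ?_ ?_
  · obtain ⟨w, hw0, hw⟩ := hlam
    exact (Submodule.ne_bot_iff _).mpr
      ⟨w, (sub_smul_one_mulVec_eq_zero_iff _ _ _).mpr hw, hw0⟩
  · rw [composite_sub_smul_one, Submodule.disjoint_def]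
    intro w hw hwi
    by_contra hw0
    rw [LinearMap.mem_ker, mulVecLin_apply] at hw
    exact h₁ _ (col_ne_zero_of_composite_mulVec_eq_zero hw hs hw0)
      (exists_mulVec_col_eq_smul_of_composite_mulVec_eq_zero hw hB hs hw0) i₀ hi₀ hwi

theorem stmt_3 (k₁ k₂ : ℕ)
    (G₁ : SimpleGraph (Fin k₁)) [DecidableRel G₁.Adj] (hG₁ : G₁.Connected)
    (G₂ : SimpleGraph (Fin k₂)) [DecidableRel G₂.Adj] (hG₂ : G₂.Connected)
    (s : Fin k₂) (P : Set (Fin k₁)) (hP : P.Nonempty)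
    (h₁ : ∀ v : Fin k₁ → ℝ, v ≠ 0 → (∃ μ : ℝ, (G₁.lapMatrix ℝ).mulVec v = μ • v) →
      ∀ i ∈ P, v i ≠ 0)
    (h₂ : ∀ v : Fin k₂ → ℝ, v ≠ 0 → (∃ μ : ℝ, (G₂.lapMatrix ℝ).mulVec v = μ • v) → v s ≠ 0)
    (lam : ℝ)
    (hlam : ∃ w : Fin k₁ × Fin k₂ → ℝ, w ≠ 0 ∧
      (composite (G₁.lapMatrix ℝ) (G₂.lapMatrix ℝ) s).mulVec w = lam • w) :
    Module.finrank ℝ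
      (LinearMap.ker ((composite (G₁.lapMatrix ℝ) (G₂.lapMatrix ℝ) s
        - lam • (1 : Matrix (Fin k₁ × Fin k₂) (Fin k₁ × Fin k₂) ℝ)).mulVecLin)) = 1 :=
  stmt_3_general k₁ k₂ G₁ G₂ s P hP h₁ h₂ lam hlam
end

section
/- Let L₁ be a k₁×k₁ real matrix, L₂ a k₂×k₂ real matrix, s ∈ {1,…,k₂}, and λ, μ ∈ ℝ. Suppose v ∈ ℝ^{k₁} and u ∈ ℝ^{k₂} are nonzero vectors with L₁ v = λ v and (L₂ + λ e_s e_sᵀ) u = μ u. Define w ∈ ℝ^{k₁·k₂} by w[(i,a)] = v_i · u_a. Then w ≠ 0 and L w = μ w, where L = I_{k₁} ⊗ L₂ + L₁ ⊗ (e_s e_sᵀ) is the composite matrix; in particular, μ is an eigenvalue of L with eigenvector w. -/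
theorem stmt_7 (k₁ k₂ : ℕ)
    (L₁ : Matrix (Fin k₁) (Fin k₁) ℝ) (L₂ : Matrix (Fin k₂) (Fin k₂) ℝ)
    (s : Fin k₂) (lam mu : ℝ)
    (v : Fin k₁ → ℝ) (u : Fin k₂ → ℝ) (hv : v ≠ 0) (hu : u ≠ 0)
    (hv1 : L₁.mulVec v = lam • v)
    (hu1 : (L₂ + Matrix.of fun a b : Fin k₂ =>
      lam * ((if a = s then (1 : ℝ) else 0) * (if b = s then (1 : ℝ) else 0))).mulVec u = mu • u)
    (w : Fin k₁ × Fin k₂ → ℝ) (hw : w = fun p => v p.1 * u p.2) :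
    w ≠ 0 ∧ (composite L₁ L₂ s).mulVec w = mu • w := by
  subst hw
  constructor
  · obtain ⟨i, hi⟩ := Function.ne_iff.mp hv
    obtain ⟨a, ha⟩ := Function.ne_iff.mp hu
    intro h
    have := congrFun h (i, a)
    simp at this
    tauto
  · funext ⟨i, a⟩
    have hu1a := congrFun hu1 a
    have hv1i := congrFun hv1 i
    simp [Matrix.mulVec, dotProduct, Matrix.add_apply, mul_ite, mul_comm,
      Finset.sum_ite_eq, Finset.sum_ite_eq'] at hu1a hv1i
    simp [composite, Matrix.mulVec, dotProduct, Fintype.sum_prod_type, add_mul,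
      Finset.sum_add_distrib, ite_mul, mul_ite, Finset.sum_ite_eq, Finset.sum_ite_eq',
      Finset.mul_sum, Finset.sum_comm (γ := Fin k₂)]
    have h2 : ∑ x : Fin k₁, L₁ i x * (v x * u s) = lam * v i * u s := by
      rw [show (∑ x : Fin k₁, L₁ i x * (v x * u s)) = (∑ x : Fin k₁, L₁ i x * v x) * u s by
        rw [Finset.sum_mul]; exact Finset.sum_congr rfl fun x _ => by ring, hv1i]
    have h3 : (∑ x : Fin k₂, L₂ a x * (v i * u x)) = v i * ∑ x : Fin k₂, u x * L₂ a x := by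
      rw [Finset.mul_sum]; exact Finset.sum_congr rfl fun x _ => by ring
    simp only [mul_add, Finset.sum_add_distrib, mul_ite, mul_zero, Finset.sum_ite_eq',
      Finset.mem_univ, if_true] at hu1a
    rw [h2, h3]
    by_cases has : a = s <;> simp [has] at hu1a ⊢ <;> linear_combination v i * hu1a
end

section
/- Let j ≥ 1 and n₁, n₂ ≥ 0 be integers, and set k₁₁ = j + n₁(2j+1), k₁₂ = j + n₂(2j+1), and k = k₁₁ + k₁₂ + 1. Then the Laplacian matrix of the path graph P_k has an eigenvector whose (k₁₁+1)-th entry is zero. -/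
/-- The path graph on `{1, …, k}`: vertex `i` is adjacent to `i + 1`. -/
def pathGraph' (k : ℕ) : SimpleGraph (Fin k) where
  Adj i j := i.val + 1 = j.val ∨ j.val + 1 = i.val
  symm := ⟨fun i j h => Or.symm h⟩
  loopless := ⟨fun i h => by omega⟩

instance (k : ℕ) : DecidableRel (pathGraph' k).Adj :=
  fun i j => inferInstanceAs (Decidable (i.val + 1 = j.val ∨ j.val + 1 = i.val))

/-
The vectors `i ↦ cos ((2i + 1) θ / 2)` with `k θ ∈ π ℤ` are eigenvectors of the Laplacian of `P_k`
(the discrete Neumann cosine modes), with eigenvalue `2 - 2 cos θ`. Take `θ = π / (2j + 1)`: then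
`k = (n₁ + n₂ + 1)(2j + 1)`, so `k θ` is a multiple of `π`, and the entry at `k₁₁` is
`cos ((2n₁ + 1) π / 2) = 0`, while the entry at `0` is `cos (θ / 2) > 0`.
-/

open Finset Matrix

lemma Fin.sum_ite_intCast_eq {M : Type*} [AddCommMonoid M] {k : ℕ} (a : ℤ) (g : ℤ → M)
    (hg : (0 ≤ a ∧ a < k) ∨ g a = 0) :
    ∑ u : Fin k, (if (u : ℤ) = a then g u else 0) = g a := by
  rcases hg with ⟨ha₀, hak⟩ | hga
  · lift a to ℕ using ha₀
    rw [Fintype.sum_eq_single ⟨a, by exact_mod_cast hak⟩ fun u hu => if_neg ?_]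
    · simp
    · contrapose! hu; ext; exact_mod_cast hu
  · rw [hga]
    exact sum_eq_zero fun u _ => by split_ifs with h <;> simp [h, hga]

/-- The reflecting boundary conditions let the endpoints be treated as having the two neighbours
`i - 1` and `i + 1` too. -/
lemma pathGraph'_lapMatrix_mulVec_apply {k : ℕ} (f : ℤ → ℝ) (h₀ : f (-1) = f 0)
    (hk : f k = f (k - 1)) (i : Fin k) :
    ((pathGraph' k).lapMatrix ℝ *ᵥ fun j => f j) i = (f i - f (i - 1)) + (f i - f (i + 1)) := by
  have hsum : ((pathGraph' k).lapMatrix ℝ *ᵥ fun j => f j) i =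
      ∑ u : Fin k, ((if (u : ℤ) = i - 1 then f i - f u else 0) +
        (if (u : ℤ) = i + 1 then f i - f u else 0)) := by
    rw [SimpleGraph.lapMatrix_mulVec_apply, SimpleGraph.degree, ← nsmul_eq_mul, ← sum_const,
      ← sum_sub_distrib, SimpleGraph.neighborFinset_eq_filter, sum_filter]
    refine sum_congr rfl fun u _ => ?_
    have hadj : (pathGraph' k).Adj i u ↔ (u : ℤ) = i - 1 ∨ (u : ℤ) = i + 1 := by
      simp only [pathGraph']; omega
    simp only [hadj]
    split_ifs <;> first | ring1 | (exfalso; omega)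
  rw [hsum, sum_add_distrib, Fin.sum_ite_intCast_eq (i - 1) (fun u => f i - f u),
    Fin.sum_ite_intCast_eq (i + 1) (fun u => f i - f u)]
  · by_cases h : (i : ℤ) + 1 < k
    · omega
    · right; rw [show (i : ℤ) + 1 = k by omega, hk, show (k : ℤ) - 1 = i by omega]; ring
  · by_cases h : (0 : ℤ) ≤ i - 1
    · omega
    · right; rw [show (i : ℤ) - 1 = -1 by omega, h₀, show (i : ℤ) = 0 by omega]; ring

open Real

lemma pathGraph'_lapMatrix_mulVec_cos (k : ℕ) {θ : ℝ} (hθ : sin (k * θ) = 0) :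
    (pathGraph' k).lapMatrix ℝ *ᵥ (fun i : Fin k => cos ((2 * (i : ℤ) + 1) * θ / 2)) =
      (2 - 2 * cos θ) • fun i : Fin k => cos ((2 * (i : ℤ) + 1) * θ / 2) := by
  set f : ℤ → ℝ := fun n => cos ((2 * n + 1) * θ / 2)
  have h₀ : f (-1) = f 0 := by
    simp only [f]; rw [← cos_neg]; congr 1; push_cast; ring
  have hk : f k = f (k - 1) := by
    simp only [f]; push_cast
    rw [show (2 * (k : ℝ) + 1) * θ / 2 = k * θ + θ / 2 by ring,
      show (2 * ((k : ℝ) - 1) + 1) * θ / 2 = k * θ - θ / 2 by ring, cos_add, cos_sub, hθ]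
    ring
  ext i
  rw [pathGraph'_lapMatrix_mulVec_apply f h₀ hk, Pi.smul_apply, smul_eq_mul]
  simp only [f]; push_cast
  rw [show (2 * ((i : ℝ) - 1) + 1) * θ / 2 = (2 * i + 1) * θ / 2 - θ by ring,
    show (2 * ((i : ℝ) + 1) + 1) * θ / 2 = (2 * i + 1) * θ / 2 + θ by ring, cos_sub, cos_add]
  ring

theorem stmt_9 (j n₁ n₂ k₁₁ k₁₂ k : ℕ) (hj : 1 ≤ j)
    (h₁₁ : k₁₁ = j + n₁ * (2 * j + 1)) (h₁₂ : k₁₂ = j + n₂ * (2 * j + 1))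
    (hk : k = k₁₁ + k₁₂ + 1) :
    ∃ v : Fin k → ℝ, v ≠ 0 ∧ (∃ μ : ℝ, ((pathGraph' k).lapMatrix ℝ).mulVec v = μ • v) ∧
      v ⟨k₁₁, by omega⟩ = 0 := by
  set θ : ℝ := π / (2 * j + 1)
  have hθk : (k : ℝ) * θ = (n₁ + n₂ + 1 : ℕ) * π := by
    simp only [θ, hk, h₁₁, h₁₂]; push_cast; field_simp; ring
  have hsin : sin (k * θ) = 0 := by rw [hθk]; exact sin_nat_mul_pi _
  refine ⟨_, fun hv => ?_, ⟨_, pathGraph'_lapMatrix_mulVec_cos k hsin⟩, ?_⟩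
  · have hθ₀ : 0 < θ := by positivity
    have hθ : θ < π := div_lt_self pi_pos (by norm_cast; omega)
    have hcos : 0 < cos (θ / 2) := cos_pos_of_mem_Ioo ⟨by linarith, by linarith⟩
    exact hcos.ne' (by simpa using congrFun hv ⟨0, by omega⟩)
  · refine cos_eq_zero_iff.mpr ⟨n₁, ?_⟩
    simp only [θ, h₁₁]; push_cast; field_simp; ring
end

section
/- Let S be a real symmetric k₂×k₂ matrix, k₁ ≥ 1 an integer, p ∈ {1,…,k₂}, and c₁, c₂ nonzero real numbers. Let 𝒮 = I_{k₁} ⊗ S + Σ_{i=1}^{k₁−1} z_i z_iᵀ acting on ℝ^{k₁·k₂}, where z_i = c₁ e_{(i−1)k₂+p} + c₂ e_{i·k₂+1}. If the first entry of every eigenvector of S is nonzero, then for every eigenvalue λ of S: λ is an eigenvalue of 𝒮, the kernel of 𝒮 − λI is one-dimensional, and every eigenvector of 𝒮 corresponding to λ has a nonzero first entry. -/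
/-- The vector `z_i = c₁ e_{(i−1)k₂+p} + c₂ e_{i·k₂+1}` (blocks indexed by `Fin k₁`,
positions in a block by `Fin k₂`; `i` runs over `1, …, k₁ − 1`). -/
def zvec (k₁ k₂ : ℕ) (p : Fin k₂) (c₁ c₂ : ℝ) (i : Fin (k₁ - 1)) : Fin k₁ × Fin k₂ → ℝ :=
  c₁ • (Pi.single ((⟨i.val, by have := i.isLt; omega⟩ : Fin k₁), p) (1 : ℝ) :
      Fin k₁ × Fin k₂ → ℝ) +
  c₂ • (Pi.single ((⟨i.val + 1, by have := i.isLt; omega⟩ : Fin k₁), (⟨0, p.pos⟩ : Fin k₂)) (1 : ℝ) :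
      Fin k₁ × Fin k₂ → ℝ)

/-- `𝒮 = I_{k₁} ⊗ S + Σ_{i=1}^{k₁−1} z_i z_iᵀ`. -/
def interS (k₁ : ℕ) {k₂ : ℕ} (S : Matrix (Fin k₂) (Fin k₂) ℝ) (p : Fin k₂) (c₁ c₂ : ℝ) :
    Matrix (Fin k₁ × Fin k₂) (Fin k₁ × Fin k₂) ℝ :=
  (Matrix.of fun q r => if q.1 = r.1 then S q.2 r.2 else 0) +
  ∑ i : Fin (k₁ - 1), Matrix.vecMulVec (zvec k₁ k₂ p c₁ c₂ i) (zvec k₁ k₂ p c₁ c₂ i)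

/-!
The λ-eigenspace of `S` is spanned by a single `w` with `w₁ ≠ 0`: two independent eigenvectors
would combine to one with vanishing first entry. With `r = -c₁ w_p / (c₂ w₁)`, the vector with
blocks `r^j w` is orthogonal to every `z_i`, hence a λ-eigenvector of `𝒮`.

Conversely let `𝒮 u = λ u`. Every `x` with blocks `t_j w` satisfies `xᵀ (I ⊗ S) = λ xᵀ` by
symmetry of `S`, so pairing with `x` gives `Σ_i (z_i ⬝ x)(z_i ⬝ u) = 0`. Since
`z_i ⬝ x = c₁ w_p t_i + c₂ w₁ t_{i+1}` and `c₂ w₁ ≠ 0`, the `t_j` can be chosen recursively with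
`z_i ⬝ x = z_i ⬝ u`, so `Σ_i (z_i ⬝ u)² = 0`. Hence `𝒮 u = (I ⊗ S) u`, each block of `u` is some
`t_j w`, and `z_i ⬝ u = 0` becomes the recurrence `t_{i+1} = r t_i`: `u` is a multiple of the
vector above.
-/

open Matrix
open scoped Kronecker

namespace Matrix

section RankOneUpdate

variable {n ι R : Type*} [Fintype n] [Fintype ι] [CommRing R]

theorem add_sum_vecMulVec_self_mulVec (D : Matrix n n R) (z : ι → n → R) (u : n → R) :
    (D + ∑ i, vecMulVec (z i) (z i)) *ᵥ u = D *ᵥ u + ∑ i, (z i ⬝ᵥ u) • z i := by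
  simp only [add_mulVec, sum_mulVec, vecMulVec_mulVec, op_smul_eq_smul]

theorem sum_dotProduct_mul_dotProduct_eq_zero {D : Matrix n n R} {z : ι → n → R} {x u : n → R}
    {μ : R} (hx : x ᵥ* D = μ • x) (hu : (D + ∑ i, vecMulVec (z i) (z i)) *ᵥ u = μ • u) :
    ∑ i, (z i ⬝ᵥ x) * (z i ⬝ᵥ u) = 0 := by
  have h := congrArg (x ⬝ᵥ ·) hu
  simp only [add_sum_vecMulVec_self_mulVec, dotProduct_add, dotProduct_mulVec, hx, dotProduct_sum,
    dotProduct_smul, smul_dotProduct, smul_eq_mul, add_eq_left] at h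
  simpa only [dotProduct_comm x, mul_comm] using h

end RankOneUpdate

theorem eq_smul_of_mulVec_eq_smul {n K : Type*} [Fintype n] [Field K] {S : Matrix n n K}
    {a₀ : n} (h : ∀ v : n → K, v ≠ 0 → (∃ μ : K, S *ᵥ v = μ • v) → v a₀ ≠ 0) {μ : K}
    {v w : n → K} (hv : S *ᵥ v = μ • v) (hw : S *ᵥ w = μ • w) (hw₀ : w a₀ ≠ 0) :
    v = (v a₀ / w a₀) • w := by
  by_contra hne
  refine h _ (sub_ne_zero.mpr hne) ⟨μ, ?_⟩ ?_
  · rw [mulVec_sub, mulVec_smul, hv, hw, smul_sub, smul_comm]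
  · simp [hw₀]

section Kronecker

variable {ι n R : Type*} [Fintype ι] [DecidableEq ι] [Fintype n] [NonAssocSemiring R]
  (S : Matrix n n R)

theorem one_kronecker_mulVec_apply (u : ι × n → R) (j : ι) (a : n) :
    ((1 : Matrix ι ι R) ⊗ₖ S *ᵥ u) (j, a) = (S *ᵥ Function.curry u j) a := by
  simp [mulVec, dotProduct, Fintype.sum_prod_type, kroneckerMap_apply, one_apply, ite_mul]

theorem vecMul_one_kronecker_apply (x : ι × n → R) (j : ι) (a : n) :
    (x ᵥ* ((1 : Matrix ι ι R) ⊗ₖ S)) (j, a) = (Function.curry x j ᵥ* S) a := by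
  simp [vecMul, dotProduct, Fintype.sum_prod_type, kroneckerMap_apply, one_apply, mul_ite]

end Kronecker

end Matrix

section FirstOrderRecurrence

variable {K : Type*} [Field K] {a b : K}

theorem exists_add_mul_succ_eq (hb : b ≠ 0) (β : ℕ → K) :
    ∃ t : ℕ → K, ∀ n, a * t n + b * t (n + 1) = β n :=
  ⟨fun n => Nat.rec 0 (fun m tm => (β m - a * tm) / b) n, fun n => by field_simp; ring⟩

theorem exists_eq_mul_pow_of_add_mul_succ_eq_zero {k : ℕ} (hb : b ≠ 0) {t : Fin k → K}
    (ht : ∀ i : Fin (k - 1), a * t ⟨i, by omega⟩ + b * t ⟨i + 1, by omega⟩ = 0) :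
    ∃ s, ∀ j, t j = s * (-a / b) ^ (j : ℕ) := by
  rcases k with _ | k
  · exact ⟨0, fun j => j.elim0⟩
  refine ⟨t 0, fun ⟨n, hn⟩ => ?_⟩
  induction n with
  | zero => simp
  | succ n ih =>
    have hrec : t ⟨n + 1, hn⟩ = -a / b * t ⟨n, by omega⟩ := by
      field_simp
      linear_combination ht ⟨n, by omega⟩
    rw [hrec, ih]
    ring

end FirstOrderRecurrence

def kronVec {ι n R : Type*} [Mul R] (t : ι → R) (w : n → R) : ι × n → R := fun q => t q.1 * w q.2

theorem curry_kronVec {ι n R : Type*} [Mul R] (t : ι → R) (w : n → R) (j : ι) :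
    Function.curry (kronVec t w) j = t j • w := rfl

section InterS

variable {k₁ k₂ : ℕ} {S : Matrix (Fin k₂) (Fin k₂) ℝ} {p : Fin k₂} {c₁ c₂ lam : ℝ}
  {w : Fin k₂ → ℝ} {u : Fin k₁ × Fin k₂ → ℝ}

theorem interS_eq_one_kronecker_add :
    interS k₁ S p c₁ c₂ = (1 : Matrix (Fin k₁) (Fin k₁) ℝ) ⊗ₖ S +
      ∑ i, vecMulVec (zvec k₁ k₂ p c₁ c₂ i) (zvec k₁ k₂ p c₁ c₂ i) := by
  rw [interS]
  congr 1
  ext q r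
  simp [kroneckerMap_apply, one_apply]

theorem zvec_dotProduct (i : Fin (k₁ - 1)) (u : Fin k₁ × Fin k₂ → ℝ) :
    zvec k₁ k₂ p c₁ c₂ i ⬝ᵥ u =
      c₁ * u (⟨i, by omega⟩, p) + c₂ * u (⟨i + 1, by omega⟩, ⟨0, p.pos⟩) := by
  simp [zvec, add_dotProduct, smul_dotProduct, single_dotProduct]

theorem zvec_dotProduct_kronVec (i : Fin (k₁ - 1)) (t : Fin k₁ → ℝ) (w : Fin k₂ → ℝ) :
    zvec k₁ k₂ p c₁ c₂ i ⬝ᵥ kronVec t w =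
      c₁ * w p * t ⟨i, by omega⟩ + c₂ * w ⟨0, p.pos⟩ * t ⟨i + 1, by omega⟩ := by
  rw [zvec_dotProduct, kronVec, kronVec]
  ring

theorem interS_mulVec_of_forall_zvec_dotProduct_eq_zero
    (hz : ∀ i, zvec k₁ k₂ p c₁ c₂ i ⬝ᵥ u = 0) :
    interS k₁ S p c₁ c₂ *ᵥ u = (1 : Matrix (Fin k₁) (Fin k₁) ℝ) ⊗ₖ S *ᵥ u := by
  simp [interS_eq_one_kronecker_add, add_sum_vecMulVec_self_mulVec, hz]

variable (k₁ p c₁ c₂ w) in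
noncomputable def interEigvec : Fin k₁ × Fin k₂ → ℝ :=
  kronVec (fun j : Fin k₁ => (-(c₁ * w p) / (c₂ * w ⟨0, p.pos⟩)) ^ (j : ℕ)) w

theorem zvec_dotProduct_interEigvec (hc₂ : c₂ ≠ 0) (hw₀ : w ⟨0, p.pos⟩ ≠ 0) (i : Fin (k₁ - 1)) :
    zvec k₁ k₂ p c₁ c₂ i ⬝ᵥ interEigvec k₁ p c₁ c₂ w = 0 := by
  rw [interEigvec, zvec_dotProduct_kronVec, pow_succ]
  field_simp
  ring

theorem interS_mulVec_interEigvec (hw : S *ᵥ w = lam • w) (hc₂ : c₂ ≠ 0)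
    (hw₀ : w ⟨0, p.pos⟩ ≠ 0) :
    interS k₁ S p c₁ c₂ *ᵥ interEigvec k₁ p c₁ c₂ w = lam • interEigvec k₁ p c₁ c₂ w := by
  rw [interS_mulVec_of_forall_zvec_dotProduct_eq_zero (zvec_dotProduct_interEigvec hc₂ hw₀)]
  ext ⟨j, a⟩
  rw [one_kronecker_mulVec_apply, interEigvec, curry_kronVec, mulVec_smul, hw]
  simp only [kronVec, Pi.smul_apply, smul_eq_mul]
  ring

theorem zvec_dotProduct_eq_zero_of_mulVec_eq_smul (hS : S.IsSymm) (hc₂ : c₂ ≠ 0)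
    (hw : S *ᵥ w = lam • w) (hw₀ : w ⟨0, p.pos⟩ ≠ 0) (hu : interS k₁ S p c₁ c₂ *ᵥ u = lam • u)
    (i : Fin (k₁ - 1)) : zvec k₁ k₂ p c₁ c₂ i ⬝ᵥ u = 0 := by
  obtain ⟨t, ht⟩ := exists_add_mul_succ_eq (a := c₁ * w p) (mul_ne_zero hc₂ hw₀)
    fun n => if hn : n < k₁ - 1 then zvec k₁ k₂ p c₁ c₂ ⟨n, hn⟩ ⬝ᵥ u else 0
  set x := kronVec (fun j : Fin k₁ => t j) w
  have hx : x ᵥ* ((1 : Matrix (Fin k₁) (Fin k₁) ℝ) ⊗ₖ S) = lam • x := by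
    ext ⟨j, a⟩
    rw [vecMul_one_kronecker_apply, curry_kronVec, smul_vecMul, ← hS.eq, vecMul_transpose, hw]
    simp only [x, kronVec, Pi.smul_apply, smul_eq_mul]
    ring
  have hxu : ∀ i, zvec k₁ k₂ p c₁ c₂ i ⬝ᵥ x = zvec k₁ k₂ p c₁ c₂ i ⬝ᵥ u := fun i => by
    simpa [x, zvec_dotProduct_kronVec] using ht i
  rw [interS_eq_one_kronecker_add] at hu
  have hsq := sum_dotProduct_mul_dotProduct_eq_zero hx hu
  simp only [hxu] at hsq
  exact congrFun (dotProduct_self_eq_zero.mp hsq) i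

theorem exists_smul_interEigvec_eq_of_mulVec_eq_smul (hS : S.IsSymm) (hc₂ : c₂ ≠ 0)
    (h : ∀ v : Fin k₂ → ℝ, v ≠ 0 → (∃ μ : ℝ, S *ᵥ v = μ • v) → v ⟨0, p.pos⟩ ≠ 0)
    (hw : S *ᵥ w = lam • w) (hw₀ : w ⟨0, p.pos⟩ ≠ 0) (hu : interS k₁ S p c₁ c₂ *ᵥ u = lam • u) :
    ∃ s : ℝ, s • interEigvec k₁ p c₁ c₂ w = u := by
  have hz := zvec_dotProduct_eq_zero_of_mulVec_eq_smul hS hc₂ hw hw₀ hu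
  rw [interS_mulVec_of_forall_zvec_dotProduct_eq_zero hz] at hu
  set t : Fin k₁ → ℝ := fun j => u (j, ⟨0, p.pos⟩) / w ⟨0, p.pos⟩
  have hut : u = kronVec t w := by
    ext ⟨j, a⟩
    have hj : S *ᵥ Function.curry u j = lam • Function.curry u j := by
      ext b
      simpa [one_kronecker_mulVec_apply] using congrFun hu (j, b)
    exact congrFun (eq_smul_of_mulVec_eq_smul h hj hw hw₀) a
  obtain ⟨s, hs⟩ := exists_eq_mul_pow_of_add_mul_succ_eq_zero (a := c₁ * w p)
    (mul_ne_zero hc₂ hw₀) (t := t) fun i => by rw [← zvec_dotProduct_kronVec, ← hut, hz]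
  refine ⟨s, ?_⟩
  ext ⟨j, a⟩
  simp only [hut, interEigvec, kronVec, Pi.smul_apply, smul_eq_mul, hs]
  ring

end InterS

theorem stmt_10_general (k₁ k₂ : ℕ) (hk₁ : 1 ≤ k₁)
    (S : Matrix (Fin k₂) (Fin k₂) ℝ) (hS : S.IsSymm)
    (p : Fin k₂) (c₁ c₂ : ℝ) (hc₂ : c₂ ≠ 0)
    (h : ∀ v : Fin k₂ → ℝ, v ≠ 0 → (∃ μ : ℝ, S.mulVec v = μ • v) → v ⟨0, p.pos⟩ ≠ 0)
    (lam : ℝ) (hlam : ∃ v : Fin k₂ → ℝ, v ≠ 0 ∧ S.mulVec v = lam • v) :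
    (∃ u : Fin k₁ × Fin k₂ → ℝ, u ≠ 0 ∧ (interS k₁ S p c₁ c₂).mulVec u = lam • u) ∧
    Module.finrank ℝ (LinearMap.ker ((interS k₁ S p c₁ c₂
      - lam • (1 : Matrix (Fin k₁ × Fin k₂) (Fin k₁ × Fin k₂) ℝ)).mulVecLin)) = 1 ∧
    (∀ u : Fin k₁ × Fin k₂ → ℝ, u ≠ 0 → (interS k₁ S p c₁ c₂).mulVec u = lam • u →
      u (⟨0, hk₁⟩, ⟨0, p.pos⟩) ≠ 0) := by
  obtain ⟨w, hw_ne, hw⟩ := hlam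
  have hw₀ : w ⟨0, p.pos⟩ ≠ 0 := h w hw_ne ⟨lam, hw⟩
  set e := interEigvec k₁ p c₁ c₂ w
  have he : interS k₁ S p c₁ c₂ *ᵥ e = lam • e := interS_mulVec_interEigvec hw hc₂ hw₀
  have he₀ : e (⟨0, hk₁⟩, ⟨0, p.pos⟩) = w ⟨0, p.pos⟩ := by simp [e, interEigvec, kronVec]
  have he_ne : e ≠ 0 := fun he0 => hw₀ (he₀ ▸ congrFun he0 _)
  have hker : LinearMap.ker ((interS k₁ S p c₁ c₂ - lam • 1).mulVecLin) = ℝ ∙ e := by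
    ext u
    rw [LinearMap.mem_ker, mulVecLin_apply, sub_mulVec, smul_mulVec, one_mulVec, sub_eq_zero,
      Submodule.mem_span_singleton]
    exact ⟨exists_smul_interEigvec_eq_of_mulVec_eq_smul hS hc₂ h hw hw₀,
      fun ⟨s, hs⟩ => by rw [← hs, mulVec_smul, he, smul_comm]⟩
  refine ⟨⟨e, he_ne, he⟩, by rw [hker, finrank_span_singleton he_ne], fun u hu_ne hu => ?_⟩
  obtain ⟨s, rfl⟩ := exists_smul_interEigvec_eq_of_mulVec_eq_smul hS hc₂ h hw hw₀ hu
  have hs : s ≠ 0 := by rintro rfl; simp at hu_ne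
  exact mul_ne_zero hs (ne_of_eq_of_ne he₀ hw₀)

theorem stmt_10 (k₁ k₂ : ℕ) (hk₁ : 1 ≤ k₁)
    (S : Matrix (Fin k₂) (Fin k₂) ℝ) (hS : S.IsSymm)
    (p : Fin k₂) (c₁ c₂ : ℝ) (hc₁ : c₁ ≠ 0) (hc₂ : c₂ ≠ 0)
    (h : ∀ v : Fin k₂ → ℝ, v ≠ 0 → (∃ μ : ℝ, S.mulVec v = μ • v) → v ⟨0, p.pos⟩ ≠ 0)
    (lam : ℝ) (hlam : ∃ v : Fin k₂ → ℝ, v ≠ 0 ∧ S.mulVec v = lam • v) :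
    (∃ u : Fin k₁ × Fin k₂ → ℝ, u ≠ 0 ∧ (interS k₁ S p c₁ c₂).mulVec u = lam • u) ∧
    Module.finrank ℝ (LinearMap.ker ((interS k₁ S p c₁ c₂
      - lam • (1 : Matrix (Fin k₁ × Fin k₂) (Fin k₁ × Fin k₂) ℝ)).mulVecLin)) = 1 ∧
    (∀ u : Fin k₁ × Fin k₂ → ℝ, u ≠ 0 → (interS k₁ S p c₁ c₂).mulVec u = lam • u →
      u (⟨0, hk₁⟩, ⟨0, p.pos⟩) ≠ 0) :=
  stmt_10_general k₁ k₂ hk₁ S hS p c₁ c₂ hc₂ h lam hlam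
end

section
/- Let S be a real symmetric k₂×k₂ matrix, k₁ ≥ 1 an integer, p ∈ {1,…,k₂}, and c₁, c₂ nonzero real numbers. Let 𝒮 = I_{k₁} ⊗ S + Σ_{i=1}^{k₁−1} z_i z_iᵀ acting on ℝ^{k₁·k₂}, where z_i = c₁ e_{(i−1)k₂+p} + c₂ e_{i·k₂+1}. Suppose the first entry and the p-th entry of every eigenvector of S are nonzero. Then for every eigenvalue λ of S, every eigenvector of 𝒮 corresponding to λ has a nonzero ((i−1)k₂+1)-th entry for every i ∈ {2,…,k₁}. -/
theorem stmt_11 (k₁ k₂ : ℕ) (hk₁ : 1 ≤ k₁)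
    (S : Matrix (Fin k₂) (Fin k₂) ℝ) (hS : S.IsSymm)
    (p : Fin k₂) (c₁ c₂ : ℝ) (hc₁ : c₁ ≠ 0) (hc₂ : c₂ ≠ 0)
    (h : ∀ v : Fin k₂ → ℝ, v ≠ 0 → (∃ μ : ℝ, S.mulVec v = μ • v) →
      v ⟨0, p.pos⟩ ≠ 0 ∧ v p ≠ 0)
    (lam : ℝ) (hlam : ∃ v : Fin k₂ → ℝ, v ≠ 0 ∧ S.mulVec v = lam • v) :
    ∀ u : Fin k₁ × Fin k₂ → ℝ, u ≠ 0 → (interS k₁ S p c₁ c₂).mulVec u = lam • u →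
      ∀ i : Fin k₁, 1 ≤ i.val → u (i, ⟨0, p.pos⟩) ≠ 0 := by
  intro u hu hSu i hi
  obtain ⟨v, hv0, hv⟩ := hlam
  obtain ⟨hv1, hvp⟩ := h v hv0 ⟨lam, hv⟩
  set z0 : Fin k₂ := ⟨0, p.pos⟩ with hz0def
  set b0 : Fin (k₁ - 1) → Fin k₁ := fun i => ⟨i.val, by have := i.isLt; omega⟩ with hb0
  set b1 : Fin (k₁ - 1) → Fin k₁ := fun i => ⟨i.val + 1, by have := i.isLt; omega⟩ with hb1
  set α : Fin (k₁ - 1) → ℝ := fun i => c₁ * u (b0 i, p) + c₂ * u (b1 i, z0) with hα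
  have hzf : ∀ (i : Fin (k₁ - 1)) (r : Fin k₁ × Fin k₂), zvec k₁ k₂ p c₁ c₂ i r =
      c₁ * (if r = (b0 i, p) then 1 else 0) + c₂ * (if r = (b1 i, z0) then 1 else 0) := by
    intro i r
    simp [zvec, Pi.single_apply, hb0, hb1, hz0def, eq_comm]
  have hdot : ∀ i : Fin (k₁ - 1),
      ∑ r : Fin k₁ × Fin k₂, zvec k₁ k₂ p c₁ c₂ i r * u r = α i := by
    intro i
    simp [hzf, add_mul, mul_ite, ite_mul, Finset.sum_add_distrib,
      Finset.sum_ite_eq, Finset.sum_ite_eq', hα]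
  -- entrywise eigen-equation
  have hent : ∀ (j : Fin k₁) (a : Fin k₂),
      (∑ b, S a b * u (j, b)) +
      (∑ i' : Fin (k₁-1), zvec k₁ k₂ p c₁ c₂ i' (j, a) * α i') = lam * u (j, a) := by
    intro j a
    have H := congrFun hSu (j, a)
    rw [Matrix.mulVec, dotProduct] at H
    simp only [Pi.smul_apply, smul_eq_mul] at H
    have expand : ∀ r : Fin k₁ × Fin k₂, interS k₁ S p c₁ c₂ (j,a) r =
        (if j = r.1 then S a r.2 else 0) +
        ∑ i' : Fin (k₁-1), zvec k₁ k₂ p c₁ c₂ i' (j,a) * zvec k₁ k₂ p c₁ c₂ i' r := by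
      intro r
      simp [interS, Matrix.sum_apply, Matrix.vecMulVec_apply]
    have step1 : ∑ r : Fin k₁ × Fin k₂, interS k₁ S p c₁ c₂ (j,a) r * u r =
        (∑ r : Fin k₁ × Fin k₂, (if j = r.1 then S a r.2 else 0) * u r) +
        ∑ r : Fin k₁ × Fin k₂,
          (∑ i' : Fin (k₁-1), zvec k₁ k₂ p c₁ c₂ i' (j,a) * zvec k₁ k₂ p c₁ c₂ i' r) * u r := by
      rw [← Finset.sum_add_distrib]
      exact Finset.sum_congr rfl fun r _ => by rw [expand r, add_mul]
    have piece1 : ∑ r : Fin k₁ × Fin k₂, (if j = r.1 then S a r.2 else 0) * u r =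
        ∑ b, S a b * u (j, b) := by
      rw [Fintype.sum_prod_type_right]
      simp [ite_mul, Finset.sum_ite_eq]
    have piece2 : ∑ r : Fin k₁ × Fin k₂,
        (∑ i' : Fin (k₁-1), zvec k₁ k₂ p c₁ c₂ i' (j,a) * zvec k₁ k₂ p c₁ c₂ i' r) * u r =
        ∑ i' : Fin (k₁-1), zvec k₁ k₂ p c₁ c₂ i' (j, a) * α i' := by
      calc ∑ r : Fin k₁ × Fin k₂,
          (∑ i' : Fin (k₁-1), zvec k₁ k₂ p c₁ c₂ i' (j,a) * zvec k₁ k₂ p c₁ c₂ i' r) * u r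
          = ∑ r : Fin k₁ × Fin k₂, ∑ i' : Fin (k₁-1),
              zvec k₁ k₂ p c₁ c₂ i' (j,a) * (zvec k₁ k₂ p c₁ c₂ i' r * u r) :=
            Finset.sum_congr rfl fun r _ => by
              rw [Finset.sum_mul]
              exact Finset.sum_congr rfl fun i' _ => by ring
        _ = ∑ i' : Fin (k₁-1), ∑ r : Fin k₁ × Fin k₂,
              zvec k₁ k₂ p c₁ c₂ i' (j,a) * (zvec k₁ k₂ p c₁ c₂ i' r * u r) := Finset.sum_comm
        _ = ∑ i' : Fin (k₁-1), zvec k₁ k₂ p c₁ c₂ i' (j, a) * α i' :=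
            Finset.sum_congr rfl fun i' _ => by rw [← Finset.mul_sum, hdot i']
    rw [← H, step1, piece1, piece2]
  -- pairing with v
  have hpair : ∀ j : Fin k₁,
      ∑ i' : Fin (k₁-1), ((c₁ * (if j = b0 i' then 1 else 0)) * v p
        + (c₂ * (if j = b1 i' then 1 else 0)) * v z0) * α i' = 0 := by
    intro j
    have key : ∀ (x : Fin k₁) (y : Fin k₂) (c : ℝ),
        ∑ a, v a * (c * (if (j,a) = (x,y) then 1 else 0))
          = (c * (if j = x then 1 else 0)) * v y := by
      intro x y c
      by_cases hx : j = x
      · subst hx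
        simp [Prod.ext_iff, mul_ite, Finset.sum_ite_eq', mul_comm]
      · simp [Prod.ext_iff, hx]
    have E : ∑ a, v a * ((∑ b, S a b * u (j, b)) +
        (∑ i' : Fin (k₁-1), zvec k₁ k₂ p c₁ c₂ i' (j, a) * α i'))
        = ∑ a, v a * (lam * u (j, a)) :=
      Finset.sum_congr rfl fun a _ => by rw [hent j a]
    have first : ∑ a, v a * (∑ b, S a b * u (j, b)) = ∑ a, v a * (lam * u (j, a)) := by
      calc ∑ a, v a * (∑ b, S a b * u (j, b))
          = ∑ a, ∑ b, (S a b * v a) * u (j, b) :=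
            Finset.sum_congr rfl fun a _ => by
              rw [Finset.mul_sum]; exact Finset.sum_congr rfl fun b _ => by ring
        _ = ∑ b, ∑ a, (S a b * v a) * u (j, b) := Finset.sum_comm
        _ = ∑ b, (lam * v b) * u (j, b) := by
            refine Finset.sum_congr rfl fun b _ => ?_
            have h2 : ∑ a, S a b * v a = lam * v b := by
              have h3 := congrFun hv b
              rw [Matrix.mulVec, dotProduct] at h3
              simp only [Pi.smul_apply, smul_eq_mul] at h3
              rw [← h3]
              exact Finset.sum_congr rfl fun a _ => by rw [hS.apply]
            rw [← Finset.sum_mul, h2]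
        _ = ∑ a, v a * (lam * u (j, a)) := Finset.sum_congr rfl fun a _ => by ring
    have second : ∑ a, v a * (∑ i' : Fin (k₁-1), zvec k₁ k₂ p c₁ c₂ i' (j, a) * α i')
        = ∑ i' : Fin (k₁-1), ((c₁ * (if j = b0 i' then 1 else 0)) * v p
          + (c₂ * (if j = b1 i' then 1 else 0)) * v z0) * α i' := by
      calc ∑ a, v a * (∑ i' : Fin (k₁-1), zvec k₁ k₂ p c₁ c₂ i' (j, a) * α i')
          = ∑ a, ∑ i' : Fin (k₁-1), (v a * zvec k₁ k₂ p c₁ c₂ i' (j, a)) * α i' :=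
            Finset.sum_congr rfl fun a _ => by
              rw [Finset.mul_sum]; exact Finset.sum_congr rfl fun i' _ => by ring
        _ = ∑ i' : Fin (k₁-1), ∑ a, (v a * zvec k₁ k₂ p c₁ c₂ i' (j, a)) * α i' :=
            Finset.sum_comm
        _ = ∑ i' : Fin (k₁-1), ((c₁ * (if j = b0 i' then 1 else 0)) * v p
            + (c₂ * (if j = b1 i' then 1 else 0)) * v z0) * α i' := by
            refine Finset.sum_congr rfl fun i' _ => ?_
            rw [← Finset.sum_mul]
            congr 1
            calc ∑ a, v a * zvec k₁ k₂ p c₁ c₂ i' (j, a)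
                = ∑ a, (v a * (c₁ * (if (j,a) = (b0 i', p) then 1 else 0))
                  + v a * (c₂ * (if (j,a) = (b1 i', z0) then 1 else 0))) :=
                  Finset.sum_congr rfl fun a _ => by rw [hzf]; ring
              _ = (c₁ * (if j = b0 i' then 1 else 0)) * v p
                  + (c₂ * (if j = b1 i' then 1 else 0)) * v z0 := by
                  rw [Finset.sum_add_distrib, key, key]
    simp only [mul_add] at E
    rw [Finset.sum_add_distrib, first, second] at E
    linarith [E]
  -- all α vanish
  have αzeroN : ∀ n : ℕ, ∀ i' : Fin (k₁ - 1), i'.val = n → α i' = 0 := by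
    intro n
    induction n using Nat.strong_induction_on with
    | _ n IH =>
      intro i' hin
      have hp := hpair (b0 i')
      have hterm : ∀ i'' : Fin (k₁-1),
          ((c₁ * (if b0 i' = b0 i'' then 1 else 0)) * v p
            + (c₂ * (if b0 i' = b1 i'' then 1 else 0)) * v z0) * α i''
          = (if i'' = i' then (c₁ * v p) * α i' else 0) := by
        intro i''
        by_cases h1 : i'' = i'
        · subst h1
          have hne : b0 i'' ≠ b1 i'' := by
            intro hh
            have := congrArg Fin.val hh
            simp only [hb0, hb1] at this
            omega
          simp [hne]
        · have hne0 : b0 i' ≠ b0 i'' := by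
            intro hh
            apply h1
            have := congrArg Fin.val hh
            simp only [hb0] at this
            exact Fin.ext this.symm
          by_cases h2 : b0 i' = b1 i''
          · have hlt : i''.val < n := by
              have := congrArg Fin.val h2
              simp only [hb0, hb1] at this
              omega
            simp [hne0, h2, IH i''.val hlt i'' rfl, h1]
          · simp [hne0, h2, h1]
      rw [Finset.sum_congr rfl fun i'' _ => hterm i''] at hp
      rw [Finset.sum_ite_eq' Finset.univ i'] at hp
      simp only [Finset.mem_univ, if_true] at hp
      rcases mul_eq_zero.mp hp with h' | h'
      · rcases mul_eq_zero.mp h' with h'' | h''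
        · exact absurd h'' hc₁
        · exact absurd h'' hvp
      · exact h' 
  have αzero : ∀ i' : Fin (k₁ - 1), α i' = 0 := fun i' => αzeroN i'.val i' rfl
  -- each block is an eigenvector (or zero)
  have hblock : ∀ (j : Fin k₁), S.mulVec (fun a => u (j, a)) = lam • (fun a => u (j, a)) := by
    intro j
    funext a
    have := hent j a
    simp only [αzero, mul_zero, Finset.sum_const_zero, add_zero] at this
    rw [Matrix.mulVec, dotProduct]
    simpa using this
  have hUzero : ∀ j : Fin k₁, (u (j, z0) = 0 ∨ u (j, p) = 0) → ∀ a, u (j, a) = 0 := by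
    intro j hj a
    by_cases hw : (fun a => u (j, a)) = 0
    · exact congrFun hw a
    · have := h _ hw ⟨lam, hblock j⟩
      rcases hj with hj | hj
      · exact absurd hj this.1
      · exact absurd hj this.2
  -- zero propagation
  intro hcontra
  have hi0 : ∀ a, u (i, a) = 0 := hUzero i (Or.inl hcontra)
  have hdown : ∀ m : ℕ, ∀ j : Fin k₁, j.val + m = i.val → ∀ a, u (j, a) = 0 := by
    intro m
    induction m with
    | zero => intro j hj a; have : j = i := Fin.ext (by omega); rw [this]; exact hi0 a
    | succ m IH =>
      intro j hj a
      have hjlt : j.val < k₁ - 1 := by have := i.isLt; omega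
      set ι : Fin (k₁ - 1) := ⟨j.val, hjlt⟩ with hι
      have hb0ι : b0 ι = j := by simp [hb0, hι]
      have hup : ∀ a, u (b1 ι, a) = 0 := IH (b1 ι) (by simp [hb1, hι]; omega)
      have := αzero ι
      rw [hα] at this
      simp only [hb0ι, hup, mul_zero, add_zero] at this
      have hup2 : u (j, p) = 0 := by
        rcases mul_eq_zero.mp this with h' | h'
        · exact absurd h' hc₁
        · exact h'
      exact hUzero j (Or.inr hup2) a
  have hupz : ∀ m : ℕ, ∀ j : Fin k₁, j.val = i.val + m → ∀ a, u (j, a) = 0 := by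
    intro m
    induction m with
    | zero => intro j hj a; have : j = i := Fin.ext (by omega); rw [this]; exact hi0 a
    | succ m IH =>
      intro j hj a
      have hjge : 1 ≤ j.val := by omega
      have hjlt : j.val - 1 < k₁ - 1 := by have := j.isLt; omega
      set ι : Fin (k₁ - 1) := ⟨j.val - 1, hjlt⟩ with hι
      have hb1ι : b1 ι = j := by simp [hb1, hι, Fin.ext_iff]; omega
      have hprev : ∀ a, u (b0 ι, a) = 0 := IH (b0 ι) (by simp [hb0, hι]; omega)
      have := αzero ι
      rw [hα] at this
      simp only [hb1ι, hprev, mul_zero, zero_add] at this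
      have hz : u (j, z0) = 0 := by
        rcases mul_eq_zero.mp this with h' | h'
        · exact absurd h' hc₂
        · exact h'
      exact hUzero j (Or.inl hz) a
  apply hu
  funext r
  obtain ⟨j, a⟩ := r
  by_cases hji : j.val ≤ i.val
  · exact hdown (i.val - j.val) j (by omega) a
  · exact hupz (j.val - i.val) j (by omega) a
end

section
/- Let S be a real symmetric k₂×k₂ matrix, k₁ ≥ 1 an integer, p ∈ {1,…,k₂}, and c₁, c₂ nonzero real numbers. Let 𝒮 = I_{k₁} ⊗ S + Σ_{i=1}^{k₁−1} z_i z_iᵀ acting on ℝ^{k₁·k₂}, where z_i = c₁ e_{(i−1)k₂+p} + c₂ e_{i·k₂+1}. Let (λ, v) be an eigenpair of S with v₁ ≠ 0, set t = −(c₁ v_p)/(c₂ v₁), and define u ∈ ℝ^{k₁·k₂} by u_{(i−1)k₂+a} = t^{i−1} v_a for i ∈ {1,…,k₁}, a ∈ {1,…,k₂}. Then u ≠ 0 and 𝒮 u = λ u; in particular, λ is an eigenvalue of 𝒮. -/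
open Matrix in
lemma vecMulVec_mulVec' {n : Type*} [Fintype n] (w v u : n → ℝ) :
    (Matrix.vecMulVec w v).mulVec u = (v ⬝ᵥ u) • w := by
  funext q
  simp [Matrix.mulVec, Matrix.vecMulVec, dotProduct, Finset.mul_sum, mul_assoc,
    mul_comm, mul_left_comm]

theorem stmt_12 (k₁ k₂ : ℕ) (hk₁ : 1 ≤ k₁)
    (S : Matrix (Fin k₂) (Fin k₂) ℝ) (hS : S.IsSymm)
    (p : Fin k₂) (c₁ c₂ : ℝ) (hc₁ : c₁ ≠ 0) (hc₂ : c₂ ≠ 0)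
    (lam : ℝ) (v : Fin k₂ → ℝ) (hv : v ≠ 0) (hev : S.mulVec v = lam • v)
    (hv1 : v ⟨0, p.pos⟩ ≠ 0)
    (t : ℝ) (ht : t = -(c₁ * v p) / (c₂ * v ⟨0, p.pos⟩))
    (u : Fin k₁ × Fin k₂ → ℝ) (hu : u = fun q => t ^ q.1.val * v q.2) :
    u ≠ 0 ∧ (interS k₁ S p c₁ c₂).mulVec u = lam • u := by
  have key : c₁ * v p + c₂ * (t * v ⟨0, p.pos⟩) = 0 := by
    rw [ht]; field_simp; ring
  constructor
  · intro h
    apply hv1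
    have := congrFun h (⟨0, hk₁⟩, ⟨0, p.pos⟩)
    simpa [hu] using this
  · have hz : ∀ i : Fin (k₁ - 1), dotProduct (zvec k₁ k₂ p c₁ c₂ i) u = 0 := by
      intro i
      rw [zvec, hu]
      rw [add_dotProduct, smul_dotProduct, smul_dotProduct,
        single_dotProduct, single_dotProduct]
      simp only [one_mul, smul_eq_mul, pow_succ]
      calc c₁ * (t ^ i.val * v p) + c₂ * (t ^ i.val * t * v ⟨0, p.pos⟩)
          = t ^ i.val * (c₁ * v p + c₂ * (t * v ⟨0, p.pos⟩)) := by ring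
        _ = 0 := by rw [key]; ring
    rw [interS, Matrix.add_mulVec]
    have hsum : (∑ i : Fin (k₁ - 1),
        Matrix.vecMulVec (zvec k₁ k₂ p c₁ c₂ i) (zvec k₁ k₂ p c₁ c₂ i)).mulVec u = 0 := by
      funext q
      simp only [Matrix.mulVec, dotProduct, Matrix.sum_apply, Finset.sum_mul,
        Pi.zero_apply]
      rw [Finset.sum_comm]
      refine Finset.sum_eq_zero fun i _ => ?_
      calc ∑ r, Matrix.vecMulVec (zvec k₁ k₂ p c₁ c₂ i) (zvec k₁ k₂ p c₁ c₂ i) q r * u r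
          = zvec k₁ k₂ p c₁ c₂ i q * dotProduct (zvec k₁ k₂ p c₁ c₂ i) u := by
            simp [Matrix.vecMulVec, dotProduct, Finset.mul_sum, mul_assoc]
        _ = 0 := by rw [hz i, mul_zero]
    rw [hsum, add_zero]
    funext q
    have hevq := congrFun hev q.2
    simp only [Matrix.mulVec, dotProduct, Matrix.of_apply, Fintype.sum_prod_type]
    rw [Finset.sum_eq_single q.1]
    · simp only [if_pos rfl, hu]
      calc ∑ r₂ : Fin k₂, S q.2 r₂ * (t ^ q.1.val * v r₂)
          = t ^ q.1.val * ∑ r₂ : Fin k₂, S q.2 r₂ * v r₂ := by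
            rw [Finset.mul_sum]; congr 1; funext r₂; ring
        _ = t ^ q.1.val * (lam • v) q.2 := by
            rw [← hevq]; rfl
        _ = (lam • fun q' : Fin k₁ × Fin k₂ => t ^ q'.1.val * v q'.2) q := by
            simp only [Pi.smul_apply, smul_eq_mul]; ring
    · intro b _ hb
      simp [(Ne.symm hb : ¬ q.1 = b)]
    · intro h; exact absurd (Finset.mem_univ q.1) h
end

section
/- Let A₁, A₂ and Z be real square matrices of orders n₁, n₂ and n₁+n₂ respectively (n₁, n₂ ≥ 1). Suppose the entries a_{ij} of A₁ satisfy a_{i,i+1} ≠ 0 for all i ∈ {1,…,n₁−1} and a_{ij} = 0 whenever j ≥ i+2, and the entries z_{ij} of Z satisfy z_{n₁,n₁+1} ≠ 0 and z_{ij} = 0 for all (i,j) ∉ {(n₁,n₁), (n₁,n₁+1), (n₁+1,n₁), (n₁+1,n₁+1)}. Let 𝒜 = blockdiag(A₁, A₂) + Z. If the first entry of every eigenvector of A₂ is nonzero, then the first entry of every eigenvector of 𝒜 is nonzero. -/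
/-- entries are described in 1-based terms in the informal statement;
here indices are 0-based, so the 1-based positions `(n₁, n₁+1)` etc. become
`(n₁ - 1, n₁)` etc., and the first entry is entry `0`. -/
theorem stmt_16 (n₁ n₂ : ℕ) (hn₁ : 1 ≤ n₁) (hn₂ : 1 ≤ n₂)
    (A₁ : Matrix (Fin n₁) (Fin n₁) ℝ) (A₂ : Matrix (Fin n₂) (Fin n₂) ℝ)
    (Z : Matrix (Fin (n₁ + n₂)) (Fin (n₁ + n₂)) ℝ)
    (hA₁super : ∀ i j : Fin n₁, j.val = i.val + 1 → A₁ i j ≠ 0)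
    (hA₁upper : ∀ i j : Fin n₁, i.val + 2 ≤ j.val → A₁ i j = 0)
    (hZne : Z ⟨n₁ - 1, by omega⟩ ⟨n₁, by omega⟩ ≠ 0)
    (hZzero : ∀ i j : Fin (n₁ + n₂),
      ¬((i.val = n₁ - 1 ∨ i.val = n₁) ∧ (j.val = n₁ - 1 ∨ j.val = n₁)) → Z i j = 0)
    (hA₂ : ∀ v : Fin n₂ → ℝ, v ≠ 0 → (∃ μ : ℝ, A₂.mulVec v = μ • v) → v ⟨0, hn₂⟩ ≠ 0)
    (𝒜 : Matrix (Fin (n₁ + n₂)) (Fin (n₁ + n₂)) ℝ)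
    (h𝒜 : 𝒜 = (Matrix.fromBlocks A₁ 0 0 A₂).submatrix
      finSumFinEquiv.symm finSumFinEquiv.symm + Z) :
    ∀ v : Fin (n₁ + n₂) → ℝ, v ≠ 0 → (∃ μ : ℝ, 𝒜.mulVec v = μ • v) →
      v ⟨0, by omega⟩ ≠ 0 := by
  intro v hv hex
  by_contra h0
  apply hv
  obtain ⟨μ, hμ⟩ := hex
  subst h𝒜
  set x : Fin n₁ → ℝ := fun i => v (Fin.castAdd n₂ i) with hxdef
  set y : Fin n₂ → ℝ := fun j => v (Fin.natAdd n₁ j) with hydef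
  have hve : v ∘ finSumFinEquiv = Sum.elim x y := by
    funext k; cases k <;> simp [hxdef, hydef]
  have hB : ((Matrix.fromBlocks A₁ 0 0 A₂).submatrix
      finSumFinEquiv.symm finSumFinEquiv.symm).mulVec v
      = fun k => Sum.elim (A₁.mulVec x) (A₂.mulVec y) (finSumFinEquiv.symm k) := by
    rw [Matrix.submatrix_mulVec_equiv]
    funext k
    simp [Equiv.symm_symm, hve, Matrix.fromBlocks_mulVec]
  have hrow : ∀ k, Sum.elim (A₁.mulVec x) (A₂.mulVec y) (finSumFinEquiv.symm k)
      + ∑ j, Z k j * v j = μ * v k := by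
    intro k
    have h := congrFun hμ k
    rw [Matrix.add_mulVec] at h
    simpa [hB, Matrix.mulVec, dotProduct] using h
  have hrow₁ : ∀ i : Fin n₁, (∑ j, A₁ i j * x j)
      + ∑ j, Z (Fin.castAdd n₂ i) j * v j = μ * x i := by
    intro i
    have h := hrow (Fin.castAdd n₂ i)
    rw [finSumFinEquiv_symm_apply_castAdd] at h
    simpa [Matrix.mulVec, dotProduct, hxdef] using h
  have hrow₂ : ∀ j : Fin n₂, (∑ j', A₂ j j' * y j')
      + ∑ j', Z (Fin.natAdd n₁ j) j' * v j' = μ * y j := by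
    intro j
    have h := hrow (Fin.natAdd n₁ j)
    rw [finSumFinEquiv_symm_apply_natAdd] at h
    simpa [Matrix.mulVec, dotProduct, hydef] using h
  -- Step 1: x vanishes
  have hxkey : ∀ m : ℕ, ∀ hm : m < n₁, x ⟨m, hm⟩ = 0 := by
    intro m
    induction m using Nat.strong_induction_on with
    | _ m ih =>
      intro hm
      match m, hm with
      | 0, hm => exact h0
      | (i+1), hm =>
        have hi : i < n₁ := by omega
        have h := hrow₁ ⟨i, hi⟩
        have hZ : ∑ j, Z (Fin.castAdd n₂ ⟨i, hi⟩) j * v j = 0 := by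
          refine Finset.sum_eq_zero fun j _ => ?_
          rw [hZzero _ _ (by simp [Fin.castAdd, Fin.castLE]; omega), zero_mul]
        have hsum : ∑ j, A₁ ⟨i, hi⟩ j * x j
            = A₁ ⟨i, hi⟩ ⟨i+1, hm⟩ * x ⟨i+1, hm⟩ := by
          refine Finset.sum_eq_single_of_mem _ (Finset.mem_univ _) fun j _ hj => ?_
          by_cases hlt : j.val < i + 1
          · rw [show x j = 0 from ih j.1 (by omega) j.2, mul_zero]
          · have hne : j.val ≠ i + 1 := fun hc => hj (Fin.ext hc)
            rw [hA₁upper ⟨i, hi⟩ j (show i + 2 ≤ j.val by omega), zero_mul]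
        rw [hZ, hsum, add_zero, show x ⟨i, hi⟩ = 0 from ih i (by omega) hi,
          mul_zero] at h
        exact (mul_eq_zero.mp h).resolve_left (hA₁super _ _ rfl)
  have hvlt : ∀ k : Fin (n₁ + n₂), k.val < n₁ → v k = 0 := fun k hk => hxkey k.1 hk
  -- Step 2: v at index n₁ vanishes
  have hvb : v ⟨n₁, by omega⟩ = 0 := by
    have h := hrow₁ ⟨n₁ - 1, by omega⟩
    have hA : ∑ j, A₁ ⟨n₁ - 1, by omega⟩ j * x j = 0 :=
      Finset.sum_eq_zero fun j _ => by rw [hxkey j.1 j.2, mul_zero]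
    have hZ : ∑ j, Z (Fin.castAdd n₂ ⟨n₁ - 1, by omega⟩) j * v j
        = Z ⟨n₁ - 1, by omega⟩ ⟨n₁, by omega⟩ * v ⟨n₁, by omega⟩ := by
      refine Finset.sum_eq_single_of_mem (⟨n₁, by omega⟩ : Fin (n₁ + n₂)) (Finset.mem_univ _)
        fun j _ hj => ?_
      by_cases hlt : j.val < n₁
      · rw [hvlt j hlt, mul_zero]
      · rw [hZzero _ _ (by
          have : j.val ≠ n₁ := fun hc => hj (Fin.ext hc)
          simp [Fin.castAdd, Fin.castLE]; omega), zero_mul]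
    rw [hA, hZ, zero_add, hxkey (n₁ - 1) (by omega), mul_zero] at h
    exact (mul_eq_zero.mp h).resolve_left hZne
  have hvle : ∀ k : Fin (n₁ + n₂), k.val ≤ n₁ → v k = 0 := by
    intro k hk
    rcases lt_or_eq_of_le hk with h | h
    · exact hvlt k h
    · rw [show k = ⟨n₁, by omega⟩ from Fin.ext h]; exact hvb
  -- Step 3: y is an eigenvector of A₂
  have hy : A₂.mulVec y = μ • y := by
    funext j
    have h := hrow₂ j
    have hZ : ∑ j', Z (Fin.natAdd n₁ j) j' * v j' = 0 := by
      refine Finset.sum_eq_zero fun j' _ => ?_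
      by_cases hle : j'.val ≤ n₁
      · rw [hvle j' hle, mul_zero]
      · rw [hZzero _ _ (by omega), zero_mul]
    rw [hZ, add_zero] at h
    simpa [Matrix.mulVec, dotProduct] using h
  have hy0 : y = 0 := by
    by_contra hy'
    exact hA₂ y hy' ⟨μ, hy⟩ (hvle (Fin.natAdd n₁ ⟨0, hn₂⟩) (by simp))
  -- Conclude v = 0
  funext k
  by_cases hk : k.val < n₁
  · exact hvlt k hk
  · have hk' : k = Fin.natAdd n₁ ⟨k.val - n₁, by omega⟩ := by
      apply Fin.ext; simp; omega
    rw [hk']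
    exact congrFun hy0 _
end

section
/- For every integer k ≥ 2, the set of eigenvalues of the Laplacian matrix L_A^{(k)} of the k-vertex antiregular graph is exactly {0, 1, …, k} \ {⌈k/2⌉}, and every eigenvalue is simple (its eigenspace is one-dimensional). -/
/-
For `m ≤ k` with `m ≠ ⌈k/2⌉` there is an explicit eigenvector of the Laplacian with eigenvalue
`m`. Its partial sums `Q t = ∑ j < t, v j` are `m - t` on the stretch between `m` and `k - m` and
vanish elsewhere; since `(L v) i = ∑ j < k - i, (v i - v j) = (k - i) v i - Q (k - i)`, the eigen
equation telescopes to the identity `(k - i - m) (Q (i + 1) - Q i) = Q (k - i)`. These are `k`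
distinct eigenvalues in dimension `k`, and eigenspaces of distinct eigenvalues are independent, so
the dimensions of all eigenspaces sum to at most `k`: there is no other eigenvalue and each
eigenspace is a line.
-/

/-- The `k`-vertex antiregular graph: vertices `1, …, k` (realized as `Fin k`, 0-based),
with `i` adjacent to `j` iff `i ≠ j` and `i + j ≤ k + 1` (in 1-based labels). -/
def antiregular (k : ℕ) : SimpleGraph (Fin k) where
  Adj i j := i ≠ j ∧ (i.val + 1) + (j.val + 1) ≤ k + 1
  symm := ⟨fun i j h => ⟨h.1.symm, by have := h.2; omega⟩⟩
  loopless := ⟨fun i h => h.1 rfl⟩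

instance (k : ℕ) : DecidableRel (antiregular k).Adj :=
  fun i j => inferInstanceAs (Decidable (i ≠ j ∧ (i.val + 1) + (j.val + 1) ≤ k + 1))

open Module Finset Matrix

theorem iSupIndep.finrank_biSup {ι K V : Type*} [Field K] [AddCommGroup V] [Module K V]
    [FiniteDimensional K V] {p : ι → Submodule K V} (hp : iSupIndep p) (T : Finset ι) :
    finrank K ↥(⨆ i ∈ T, p i) = ∑ i ∈ T, finrank K (p i) := by
  classical
  induction T using Finset.induction_on with
  | empty => simp
  | insert a T ha ih =>
    have hdisj : Disjoint (p a) (⨆ i ∈ T, p i) := hp.disjoint_biSup (y := (T : Set ι)) ha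
    rw [Finset.iSup_insert, sum_insert ha, ← ih, ← Submodule.finrank_sup_add_finrank_inf_eq,
      hdisj.eq_bot, finrank_bot, add_zero]

namespace Module.End

variable {K V : Type*} [Field K] [AddCommGroup V] [Module K V] [FiniteDimensional K V]
  {f : End K V}

theorem sum_finrank_eigenspace_le (f : End K V) (T : Finset K) :
    ∑ μ ∈ T, finrank K (f.eigenspace μ) ≤ finrank K V :=
  (f.eigenspaces_iSupIndep.finrank_biSup T).symm.trans_le (Submodule.finrank_le _)

theorem HasEigenvalue.one_le_finrank_eigenspace {μ : K} (h : f.HasEigenvalue μ) :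
    1 ≤ finrank K (f.eigenspace μ) :=
  Nat.one_le_iff_ne_zero.mpr (mt Submodule.finrank_eq_zero.mp h)

theorem card_le_sum_finrank_eigenspace {T : Finset K} (hT : ∀ μ ∈ T, f.HasEigenvalue μ) :
    #T ≤ ∑ μ ∈ T, finrank K (f.eigenspace μ) := by
  simpa using card_nsmul_le_sum T _ 1 fun μ hμ => (hT μ hμ).one_le_finrank_eigenspace

variable {S : Finset K}

theorem mem_of_hasEigenvalue_of_finrank_le_card (hS : ∀ μ ∈ S, f.HasEigenvalue μ)
    (hcard : finrank K V ≤ #S) {μ : K} (hμ : f.HasEigenvalue μ) : μ ∈ S := by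
  classical
  by_contra hμS
  have hT : ∀ ν ∈ insert μ S, f.HasEigenvalue ν := by
    simpa [forall_mem_insert] using ⟨hμ, hS⟩
  have := (card_le_sum_finrank_eigenspace hT).trans (f.sum_finrank_eigenspace_le _)
  rw [card_insert_of_notMem hμS] at this
  omega

theorem finrank_eigenspace_eq_one_of_finrank_le_card (hS : ∀ μ ∈ S, f.HasEigenvalue μ)
    (hcard : finrank K V ≤ #S) {μ : K} (hμ : μ ∈ S) :
    finrank K (f.eigenspace μ) = 1 := by
  classical
  have hrest := card_le_sum_finrank_eigenspace (T := S.erase μ) fun ν hν =>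
    hS ν (mem_of_mem_erase hν)
  rw [card_erase_of_mem hμ] at hrest
  have := (add_sum_erase S _ hμ).trans_le (f.sum_finrank_eigenspace_le S)
  have := (hS μ hμ).one_le_finrank_eigenspace
  omega

end Module.End

theorem Matrix.hasEigenvalue_mulVecLin_iff {n R : Type*} [Fintype n] [CommRing R]
    {A : Matrix n n R} {μ : R} :
    Module.End.HasEigenvalue A.mulVecLin μ ↔ ∃ v, v ≠ 0 ∧ A *ᵥ v = μ • v := by
  rw [Module.End.hasEigenvalue_iff, Submodule.ne_bot_iff]
  simp [and_comm]

theorem Matrix.ker_mulVecLin_sub_smul_one {n R : Type*} [Fintype n] [DecidableEq n] [CommRing R]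
    (A : Matrix n n R) (μ : R) :
    LinearMap.ker (A - μ • (1 : Matrix n n R)).mulVecLin =
      Module.End.eigenspace A.mulVecLin μ := by
  rw [Module.End.eigenspace_def]
  congr 1
  ext v i
  simp

namespace antiregular

theorem lapMatrix_mulVec_apply {n : ℕ} (w : ℕ → ℝ) (i : Fin n) :
    ((antiregular n).lapMatrix ℝ *ᵥ fun j => w j) i = ∑ j ∈ range (n - i), (w i - w j) := by
  classical
  -- the summand for `j = i` vanishes, so the neighbours of `i` may be replaced by `range (n - i)`
  have hadj (u : Fin n) : (if (antiregular n).Adj i u then w i - w u else 0) =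
      if (i : ℕ) + u < n then w i - w u else 0 := by
    by_cases hiu : i = u
    · simp [hiu]
    · refine if_congr ?_ rfl rfl
      simp only [antiregular, ne_eq, hiu, not_false_eq_true, true_and]
      omega
  have hrange : (range n).filter (fun j => (i : ℕ) + j < n) = range (n - i) := by
    ext j; simp only [mem_filter, mem_range]; omega
  rw [SimpleGraph.lapMatrix_mulVec_apply, SimpleGraph.degree, ← nsmul_eq_mul, ← sum_const,
    ← sum_sub_distrib, SimpleGraph.neighborFinset_eq_filter, sum_filter,
    sum_congr rfl fun u _ => hadj u,
    Fin.sum_univ_eq_sum_range (fun j => if (i : ℕ) + j < n then w i - w j else 0),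
    ← sum_filter, hrange]

/-- `∑ j < t, v j` for the eigenvector `v` of `antiregular n` with eigenvalue `m`. -/
def eigenPartialSum (n m t : ℕ) : ℤ :=
  if (m ≤ t ∧ t + m ≤ n) ∨ (n < t + m ∧ t ≤ m) then (m : ℤ) - t else 0

def eigenvector (n m : ℕ) : Fin n → ℝ :=
  fun j => ((eigenPartialSum n m (j + 1) - eigenPartialSum n m j : ℤ) : ℝ)

theorem eigenPartialSum_zero {n m : ℕ} (hm : m ≤ n) : eigenPartialSum n m 0 = 0 := by
  unfold eigenPartialSum
  split_ifs <;> omega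

theorem sub_mul_eigenPartialSum_succ_sub {n m i s : ℕ} (h : i + s = n) :
    ((s : ℤ) - m) * (eigenPartialSum n m (i + 1) - eigenPartialSum n m i) =
      eigenPartialSum n m s := by
  unfold eigenPartialSum
  rcases eq_or_ne m (i + 1) with rfl | hm
  · split_ifs <;> push_cast <;> grind
  · split_ifs <;> grind

theorem lapMatrix_mulVec_eigenvector {n m : ℕ} (hm : m ≤ n) :
    (antiregular n).lapMatrix ℝ *ᵥ eigenvector n m = (m : ℝ) • eigenvector n m := by
  ext i
  let P := eigenPartialSum n m
  have hs : (i : ℕ) + (n - i) = n := by omega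
  have hstep : ((n - i : ℕ) - m : ℝ) * (P (i + 1) - P i : ℤ) = P (n - i) := by
    exact_mod_cast sub_mul_eigenPartialSum_succ_sub hs
  have htelescope : ∑ j ∈ range (n - i), ((P (j + 1) - P j : ℤ) : ℝ) = P (n - i) := by
    rw [← Int.cast_sum, sum_range_sub, show P 0 = 0 from eigenPartialSum_zero hm, sub_zero]
  unfold eigenvector
  rw [lapMatrix_mulVec_apply (fun j => ((P (j + 1) - P j : ℤ) : ℝ)), sum_sub_distrib, sum_const,
    card_range, nsmul_eq_mul, htelescope, ← hstep]
  simp only [Pi.smul_apply, smul_eq_mul]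
  ring

theorem eigenvector_ne_zero {n m : ℕ} (hm : m ≤ n) (hmid : m ≠ (n + 1) / 2) :
    eigenvector n m ≠ 0 := by
  obtain ⟨j, hj⟩ : ∃ j : Fin n, eigenPartialSum n m (j + 1) - eigenPartialSum n m j = -1 := by
    by_cases h : 2 * m + 1 ≤ n
    · exact ⟨⟨m, by omega⟩, by simp only [eigenPartialSum]; split_ifs <;> omega⟩
    · exact ⟨⟨m - 1, by omega⟩, by simp only [eigenPartialSum]; split_ifs <;> omega⟩
  intro h0
  simpa [eigenvector, hj] using congrFun h0 j

end antiregular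

theorem stmt_17_general (k : ℕ) :
    (∀ mu : ℝ,
      (∃ v : Fin k → ℝ, v ≠ 0 ∧ ((antiregular k).lapMatrix ℝ).mulVec v = mu • v) ↔
      (∃ m : ℕ, m ≤ k ∧ m ≠ (k + 1) / 2 ∧ mu = (m : ℝ))) ∧
    (∀ mu : ℝ,
      (∃ v : Fin k → ℝ, v ≠ 0 ∧ ((antiregular k).lapMatrix ℝ).mulVec v = mu • v) →
      Module.finrank ℝ (LinearMap.ker (((antiregular k).lapMatrix ℝ)
        - mu • (1 : Matrix (Fin k) (Fin k) ℝ)).mulVecLin) = 1) := by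
  set f : Module.End ℝ (Fin k → ℝ) := ((antiregular k).lapMatrix ℝ).mulVecLin
  set S : Finset ℝ := ((range (k + 1)).erase ((k + 1) / 2)).image Nat.cast
  have hS : ∀ μ ∈ S, f.HasEigenvalue μ := by
    simp only [S, forall_mem_image, mem_erase, mem_range]
    rintro m ⟨hmid, hm⟩
    exact Matrix.hasEigenvalue_mulVecLin_iff.mpr ⟨antiregular.eigenvector k m,
      antiregular.eigenvector_ne_zero (by omega) hmid,
      antiregular.lapMatrix_mulVec_eigenvector (by omega)⟩
  have hcard : finrank ℝ (Fin k → ℝ) ≤ #S := by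
    rw [Module.finrank_fin_fun, card_image_of_injective _ Nat.cast_injective,
      card_erase_of_mem (mem_range.mpr (by omega)), card_range, Nat.add_sub_cancel]
  have hmem (μ : ℝ) : f.HasEigenvalue μ ↔ μ ∈ S :=
    ⟨Module.End.mem_of_hasEigenvalue_of_finrank_le_card hS hcard, hS μ⟩
  refine ⟨fun μ => ?_, fun μ hμ => ?_⟩
  · rw [← Matrix.hasEigenvalue_mulVecLin_iff, hmem]
    simp only [S, mem_image, mem_erase, mem_range, Nat.lt_succ_iff]
    grind
  · rw [Matrix.ker_mulVecLin_sub_smul_one]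
    exact Module.End.finrank_eigenspace_eq_one_of_finrank_le_card hS hcard
      ((hmem μ).mp (Matrix.hasEigenvalue_mulVecLin_iff.mpr hμ))

/-- the eigenvalues of the Laplacian of the `k`-vertex antiregular graph
are exactly `{0, 1, …, k} \ {⌈k/2⌉}` (note `⌈k/2⌉ = (k+1)/2` in ℕ), and each eigenvalue
is simple. -/
theorem stmt_17 (k : ℕ) (hk : 2 ≤ k) :
    (∀ mu : ℝ,
      (∃ v : Fin k → ℝ, v ≠ 0 ∧ ((antiregular k).lapMatrix ℝ).mulVec v = mu • v) ↔
      (∃ m : ℕ, m ≤ k ∧ m ≠ (k + 1) / 2 ∧ mu = (m : ℝ))) ∧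
    (∀ mu : ℝ,
      (∃ v : Fin k → ℝ, v ≠ 0 ∧ ((antiregular k).lapMatrix ℝ).mulVec v = mu • v) →
      Module.finrank ℝ (LinearMap.ker (((antiregular k).lapMatrix ℝ)
        - mu • (1 : Matrix (Fin k) (Fin k) ℝ)).mulVecLin) = 1) :=
  stmt_17_general k
end
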